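/- Let d ≥ 1. The divergence map v ↦ ∑_{i=1}^d ∂_i v_i sends the Raviart–Thomas space RT_k = [P_k]^d ⊕ x P̃_k onto P_k; that is, for every polynomial w of total degree at most k in d real variables there exists a vector field v in RT_k with ∑_{i=1}^d ∂_i v_i = w. -/
import Mathlib


open MvPolynomial

/-- The linear map sending a polynomial `q` to the vector field `x q = (X₁ q, …, X_d q)`. -/
noncomputable def xMulVec (d : ℕ) :
    MvPolynomial (Fin d) ℝ →ₗ[ℝ] (Fin d → MvPolynomial (Fin d) ℝ) :=
  LinearMap.pi fun i => LinearMap.mulLeft ℝ (X i)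

/-- Divergence as a linear map. -/
noncomputable def divMap (d : ℕ) :
    (Fin d → MvPolynomial (Fin d) ℝ) →ₗ[ℝ] MvPolynomial (Fin d) ℝ :=
  ∑ i : Fin d, (pderiv i).toLinearMap.comp (LinearMap.proj i)

lemma divMap_apply (d : ℕ) (v : Fin d → MvPolynomial (Fin d) ℝ) :
    divMap d v = ∑ i : Fin d, pderiv i (v i) := by
  simp [divMap]

lemma div_xMulVec_monomial (d : ℕ) (m : Fin d →₀ ℕ) (c : ℝ) :
    divMap d (xMulVec d (monomial m c)) =
      ((m.sum fun _ e => e : ℕ) + d : ℝ) • monomial m c := by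
  have hterm : ∀ i : Fin d,
      pderiv i (X i * monomial m c) = monomial m (c * (1 + m i)) := by
    intro i
    rw [X, monomial_mul, pderiv_monomial]
    simp [add_tsub_cancel_left]
  rw [divMap_apply]
  simp only [xMulVec, LinearMap.pi_apply, LinearMap.mulLeft_apply, hterm]
  rw [← map_sum, smul_monomial]
  congr 1
  have hsum : (m.sum fun _ e => e) = ∑ i : Fin d, m i :=
    Finsupp.sum_fintype _ _ (fun _ => rfl)
  rw [hsum]
  push_cast
  simp [mul_add, add_mul, Finset.sum_add_distrib, Finset.sum_mul, mul_comm c,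
    Finset.sum_const, nsmul_eq_mul, add_comm]


/-- The divergence map `v ↦ ∑ i, ∂_i v_i` sends the Raviart–Thomas space
`RT_k = [P_k]^d ⊕ x P̃_k` onto `P_k`: for every polynomial `w` of total degree at most `k`
there exists `v ∈ RT_k` with `∑ i, ∂_i v_i = w`. -/
theorem divergence_surjective_on_RT (d k : ℕ) (hd : 1 ≤ d)
    (w : MvPolynomial (Fin d) ℝ) (hw : w.totalDegree ≤ k) :
    ∃ v ∈ (Submodule.pi Set.univ fun _ : Fin d => restrictTotalDegree (Fin d) ℝ k) ⊔
        (homogeneousSubmodule (Fin d) ℝ k).map (xMulVec d),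
      ∑ i : Fin d, pderiv i (v i) = w := by
  set S := (Submodule.pi Set.univ fun _ : Fin d => restrictTotalDegree (Fin d) ℝ k) ⊔
      (homogeneousSubmodule (Fin d) ℝ k).map (xMulVec d) with hS
  suffices h : w ∈ S.map (divMap d) by
    obtain ⟨v, hvS, hv⟩ := h
    exact ⟨v, hvS, by rw [← divMap_apply, hv]⟩
  nth_rewrite 1 [w.as_sum]
  apply Submodule.sum_mem
  intro m hm
  set n : ℕ := m.sum fun _ e => e with hn
  have hmk : n ≤ k := le_trans (le_totalDegree hm) hw
  have hpos : ((n : ℝ) + d) ≠ 0 := by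
    have : (0 : ℝ) < d := by exact_mod_cast lt_of_lt_of_le Nat.zero_lt_one hd
    positivity
  set c : ℝ := coeff m w
  refine ⟨((n : ℝ) + d)⁻¹ • xMulVec d (monomial m c), ?_, ?_⟩
  · apply Submodule.smul_mem
    rcases eq_or_lt_of_le hmk with heq | hlt
    · apply Submodule.mem_sup_right
      exact Submodule.mem_map_of_mem
        (by rw [mem_homogeneousSubmodule]; exact isHomogeneous_monomial _ heq)
    · apply Submodule.mem_sup_left
      rw [Submodule.mem_pi]
      intro i _
      rw [mem_restrictTotalDegree]
      simp only [xMulVec, LinearMap.pi_apply, LinearMap.mulLeft_apply]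
      calc (X i * monomial m c).totalDegree
          ≤ (X i).totalDegree + (monomial m c).totalDegree := totalDegree_mul _ _
        _ ≤ 1 + n := by
            gcongr
            · exact le_of_eq (totalDegree_X i)
            · exact totalDegree_monomial_le m c
        _ ≤ k := by omega
  · rw [map_smul, div_xMulVec_monomial, ← hn, smul_smul, inv_mul_cancel₀ hpos, one_smul]
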